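/- arXiv:math/9404215 — 2 statements merged into one kernel-verified Lean document; each statement's English description precedes it below -/
import Mathlib

section
/- Suppose every bounded linear operator from E to F is unconditionally converging and every bounded linear operator from E to c₀ is unconditionally converging. Then every bounded linear operator from E to c₀(F) (the space of norm-null sequences in F with sup norm) is unconditionally converging. -/
open Filter Topology NormedSpace ContinuousLinearMap ZeroAtInfty

noncomputable section

/-- A formal series is weakly unconditionally Cauchy. -/
def WUC {E : Type*} [NormedAddCommGroup E] [NormedSpace ℝ E] (x : ℕ → E) : Prop :=
  ∀ φ : E →L[ℝ] ℝ, Summable fun i => |φ (x i)|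

/-- A series is unconditionally convergent: every subseries is norm convergent. -/
def UncondConv {F : Type*} [NormedAddCommGroup F] [NormedSpace ℝ F] (y : ℕ → F) : Prop :=
  ∀ s : Set ℕ, ∃ a : F,
    Tendsto (fun n => ∑ i ∈ Finset.range n, Set.indicator s y i) atTop (𝓝 a)

def WeaklyConvTo {E : Type*} [NormedAddCommGroup E] [NormedSpace ℝ E]
    (x : ℕ → E) (x₀ : E) : Prop :=
  ∀ φ : E →L[ℝ] ℝ, Tendsto (fun n => φ (x n)) atTop (𝓝 (φ x₀))

def WeaklyCauchy {E : Type*} [NormedAddCommGroup E] [NormedSpace ℝ E] (x : ℕ → E) : Prop :=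
  ∀ φ : E →L[ℝ] ℝ, ∃ l : ℝ, Tendsto (fun n => φ (x n)) atTop (𝓝 l)

/-- Unconditionally converging operator. -/
def UCop {E F : Type*} [NormedAddCommGroup E] [NormedSpace ℝ E]
    [NormedAddCommGroup F] [NormedSpace ℝ F] (T : E →L[ℝ] F) : Prop :=
  ∀ x : ℕ → E, WUC x → UncondConv fun i => T (x i)

/-- Completely continuous operator. -/
def CCop {E F : Type*} [NormedAddCommGroup E] [NormedSpace ℝ E]
    [NormedAddCommGroup F] [NormedSpace ℝ F] (T : E →L[ℝ] F) : Prop :=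
  ∀ (x : ℕ → E) (x₀ : E), WeaklyConvTo x x₀ →
    Tendsto (fun n => T (x n)) atTop (𝓝 (T x₀))

/-- Weakly compact operator: the image of the closed unit ball is relatively
weakly compact. -/
def WCompactOp {E F : Type*} [NormedAddCommGroup E] [NormedSpace ℝ E]
    [NormedAddCommGroup F] [NormedSpace ℝ F] (T : E →L[ℝ] F) : Prop :=
  IsCompact (closure (toWeakSpaceCLM ℝ F '' (T '' Metric.closedBall 0 1)))

/-- The Dunford–Pettis property. -/
def DPP (E : Type*) [NormedAddCommGroup E] [NormedSpace ℝ E] : Prop :=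
  ∀ (F : Type) (_ : NormedAddCommGroup F) (_ : NormedSpace ℝ F) (_ : CompleteSpace F),
    ∀ T : E →L[ℝ] F, WCompactOp T → CCop T

/-- The adjoint of an operator between Banach spaces. -/
def opAdj {E F : Type*} [NormedAddCommGroup E] [NormedSpace ℝ E]
    [NormedAddCommGroup F] [NormedSpace ℝ F] (T : E →L[ℝ] F) :
    StrongDual ℝ F →L[ℝ] StrongDual ℝ E :=
  (ContinuousLinearMap.compSL E F ℝ (RingHom.id ℝ) (RingHom.id ℝ)).flip T

/-- The second adjoint (bitranspose). -/
def biAdj {E F : Type*} [NormedAddCommGroup E] [NormedSpace ℝ E]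
    [NormedAddCommGroup F] [NormedSpace ℝ F] (T : E →L[ℝ] F) :
    StrongDual ℝ (StrongDual ℝ E) →L[ℝ] StrongDual ℝ (StrongDual ℝ F) :=
  opAdj (opAdj T)

/-!
A series in `c₀(F)` fails to have null terms only if its terms have a bump of fixed size either at a
fixed coordinate `k` or at coordinates `k j → ∞`. The first is excluded by the unconditionally
converging operator `e ↦ (T e) k` into `F`; the second by the operator into `c₀` whose `j`-th
coordinate is a norming functional applied to `(T e) (k j)`. For operators into a Banach space,
null images of all w.u.C. series already force unconditional convergence, since the block sums of a
w.u.C. series are again w.u.C.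
-/

section WUC

variable {E : Type*} [NormedAddCommGroup E] [NormedSpace ℝ E] {x : ℕ → E}

theorem WUC.indicator (hx : WUC x) (s : Set ℕ) : WUC (s.indicator x) := fun φ =>
  (hx φ).of_nonneg_of_le (fun _ => abs_nonneg _) fun i => by
    by_cases hi : i ∈ s <;> simp [hi]

theorem WUC.blocks (hx : WUC x) {a : ℕ → ℕ} (ha : Monotone a) :
    WUC fun j => ∑ i ∈ Finset.Ico (a j) (a (j + 1)), x i := by
  intro φ
  have hblock : ∀ j, |φ (∑ i ∈ Finset.Ico (a j) (a (j + 1)), x i)|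
      ≤ ∑ i ∈ Finset.Ico (a j) (a (j + 1)), |φ (x i)| := fun j => by
    rw [map_sum]
    exact Finset.abs_sum_le_sum_abs _ _
  refine Summable.of_nonneg_of_le (fun _ => abs_nonneg _) hblock ?_
  refine summable_of_sum_range_le (c := ∑' i, |φ (x i)|)
    (fun _ => Finset.sum_nonneg fun _ _ => abs_nonneg _) fun J => ?_
  have htelescope : ∀ J, ∑ j ∈ Finset.range J, ∑ i ∈ Finset.Ico (a j) (a (j + 1)), |φ (x i)|
      = ∑ i ∈ Finset.Ico (a 0) (a J), |φ (x i)| := by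
    intro J
    induction J with
    | zero => simp
    | succ J ih =>
      rw [Finset.sum_range_succ, ih, Finset.sum_Ico_consecutive _ (ha J.zero_le) (ha J.le_succ)]
  rw [htelescope]
  exact (hx φ).sum_le_tsum _ fun _ _ => abs_nonneg _

end WUC

theorem exists_blocks_of_not_cauchySeq {F : Type*} [NormedAddCommGroup F] {y : ℕ → F}
    (hy : ¬CauchySeq fun n => ∑ i ∈ Finset.range n, y i) :
    ∃ ε > 0, ∃ a : ℕ → ℕ, Monotone a ∧ ∀ j, ε ≤ ‖∑ i ∈ Finset.Ico (a j) (a (j + 1)), y i‖ := by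
  rw [Metric.cauchySeq_iff'] at hy
  push Not at hy
  obtain ⟨ε, hε, hstep⟩ := hy
  choose b hb hbε using hstep
  refine ⟨ε, hε, fun j => b^[j] 0, monotone_nat_of_le_succ fun j => ?_, fun j => ?_⟩
  · rw [Function.iterate_succ_apply']
    exact hb _
  · dsimp only
    rw [Function.iterate_succ_apply', Finset.sum_Ico_eq_sub _ (hb _), ← dist_eq_norm]
    exact hbε _

section UCop

variable {E F : Type*} [NormedAddCommGroup E] [NormedSpace ℝ E]
  [NormedAddCommGroup F] [NormedSpace ℝ F] {T : E →L[ℝ] F}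

theorem UCop.tendsto_zero (hT : UCop T) {x : ℕ → E} (hx : WUC x) :
    Tendsto (fun i => T (x i)) atTop (𝓝 0) := by
  obtain ⟨a, ha⟩ := hT x hx Set.univ
  simp only [Set.indicator_univ] at ha
  simpa using ((ha.comp (tendsto_add_atTop_nat 1)).sub ha).congr fun n => by
    simp [Finset.sum_range_succ]

theorem UCop.of_tendsto_zero [CompleteSpace F]
    (hT : ∀ x : ℕ → E, WUC x → Tendsto (fun i => T (x i)) atTop (𝓝 0)) : UCop T := by
  intro x hx s
  rw [← Function.comp_def T x, Set.indicator_comp_of_zero T.map_zero]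
  refine cauchySeq_tendsto_of_complete (by_contra fun hnc => ?_)
  obtain ⟨ε, hε, a, ha, hblock⟩ := exists_blocks_of_not_cauchySeq hnc
  obtain ⟨j, hj⟩ :=
    (NormedAddGroup.tendsto_nhds_zero.1 (hT _ ((hx.indicator s).blocks ha)) ε hε).exists
  simp only [map_sum, Function.comp_apply] at hj hblock
  exact (hblock j).not_gt hj

end UCop

namespace ZeroAtInftyContinuousMap

section Eval

variable {α β : Type*} [TopologicalSpace α] [NormedAddCommGroup β]

theorem norm_apply_le (f : C₀(α, β)) (x : α) : ‖f x‖ ≤ ‖f‖ :=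
  f.toBCF.norm_coe_le_norm x

theorem norm_le_of_forall {f : C₀(α, β)} {C : ℝ} (hC : 0 ≤ C) (h : ∀ x, ‖f x‖ ≤ C) : ‖f‖ ≤ C :=
  (BoundedContinuousFunction.norm_le hC).2 h

variable (𝕜 : Type*) [NormedField 𝕜] [NormedSpace 𝕜 β]

def evalCLM (x : α) : C₀(α, β) →L[𝕜] β :=
  LinearMap.mkContinuous
    { toFun := fun f => f x
      map_add' := fun _ _ => rfl
      map_smul' := fun _ _ => rfl } 1
    fun f => by simpa using f.norm_apply_le x

end Eval

section Diagonal

variable {𝕜 F G : Type*} [NontriviallyNormedField 𝕜] [NormedAddCommGroup F] [NormedSpace 𝕜 F]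
  [NormedAddCommGroup G] [NormedSpace 𝕜 G]
  (g : ℕ → F →L[𝕜] G) {C : ℝ} {k : ℕ → ℕ}

theorem tendsto_diagonal_zero (hg : ∀ j, ‖g j‖ ≤ C) (hk : Tendsto k atTop atTop) (f : C₀(ℕ, F)) :
    Tendsto (fun j => g j (f (k j))) (cocompact ℕ) (𝓝 0) := by
  have hf : Tendsto (fun j => f (k j)) atTop (𝓝 0) := by
    have hf₀ := f.zero_at_infty'
    rw [cocompact_eq_atTop] at hf₀
    exact hf₀.comp hk
  rw [cocompact_eq_atTop]
  refine squeeze_zero_norm (fun j => (g j).le_of_opNorm_le (hg j) _) ?_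
  simpa using (tendsto_norm_zero.comp hf).const_mul C

def diagonalCLM (hg : ∀ j, ‖g j‖ ≤ C) (hk : Tendsto k atTop atTop) : C₀(ℕ, F) →L[𝕜] C₀(ℕ, G) :=
  LinearMap.mkContinuous
    { toFun := fun f =>
        ⟨⟨fun j => g j (f (k j)), continuous_of_discreteTopology⟩, tendsto_diagonal_zero g hg hk f⟩
      map_add' := fun _ _ => by ext; simp
      map_smul' := fun _ _ => by ext; simp } C
    fun f => norm_le_of_forall (mul_nonneg ((norm_nonneg _).trans (hg 0)) (norm_nonneg f))
      fun j => (g j).le_of_opNorm_le (hg j) _ |>.trans <|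
        mul_le_mul_of_nonneg_left (f.norm_apply_le _) ((norm_nonneg _).trans (hg 0))

end Diagonal

theorem tendsto_zero_of_apply_of_diagonal {F : Type*} [NormedAddCommGroup F] {f : ℕ → C₀(ℕ, F)}
    (hcoord : ∀ k, Tendsto (fun j => f j k) atTop (𝓝 0))
    (hdiag : ∀ k : ℕ → ℕ, Tendsto k atTop atTop → Tendsto (fun j => f j (k j)) atTop (𝓝 0)) :
    Tendsto f atTop (𝓝 0) := by
  classical
  refine NormedAddGroup.tendsto_nhds_zero.2 fun ε hε => ?_
  have hδ : 0 < ε / 2 := half_pos hε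
  let k : ℕ → ℕ := fun j => if h : ∃ i, ε / 2 ≤ ‖f j i‖ then h.choose else j
  have hk_large : ∀ j, (∃ i, ε / 2 ≤ ‖f j i‖) → ε / 2 ≤ ‖f j (k j)‖ := fun j h => by
    simp only [k, dif_pos h]
    exact h.choose_spec
  -- coordinates below `K` are eventually small, so eventually `k j` is not among them
  have hk : Tendsto k atTop atTop := by
    refine tendsto_atTop.2 fun K => ?_
    have hsmall : ∀ᶠ j in atTop, ∀ i ∈ Finset.range K, ‖f j i‖ < ε / 2 :=
      (eventually_all_finset _).2 fun i _ => NormedAddGroup.tendsto_nhds_zero.1 (hcoord i) _ hδ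
    filter_upwards [hsmall, eventually_ge_atTop K] with j hj hKj
    by_cases h : ∃ i, ε / 2 ≤ ‖f j i‖
    · by_contra hlt
      exact (hk_large j h).not_gt (hj _ (Finset.mem_range.2 (not_le.1 hlt)))
    · simpa only [k, dif_neg h] using hKj
  filter_upwards [NormedAddGroup.tendsto_nhds_zero.1 (hdiag k hk) _ hδ] with j hj
  have hsmall : ∀ i, ‖f j i‖ ≤ ε / 2 := fun i =>
    le_of_lt (not_le.1 fun hi => hj.not_ge (hk_large j ⟨i, hi⟩))
  exact (norm_le_of_forall hδ.le hsmall).trans_lt (half_lt_self hε)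

end ZeroAtInftyContinuousMap

theorem uc_into_c0_of_F_general {E F : Type*} [NormedAddCommGroup E] [NormedSpace ℝ E] [NormedAddCommGroup F] [NormedSpace ℝ F] [CompleteSpace F]
    (h1 : ∀ T : E →L[ℝ] F, UCop T)
    (h2 : ∀ T : E →L[ℝ] C₀(ℕ, ℝ), UCop T) :
    ∀ T : E →L[ℝ] C₀(ℕ, F), UCop T := by
  intro T
  refine UCop.of_tendsto_zero fun x hx => ?_
  refine ZeroAtInftyContinuousMap.tendsto_zero_of_apply_of_diagonal (fun k => ?_) fun k hk => ?_
  · exact (h1 ((ZeroAtInftyContinuousMap.evalCLM ℝ k).comp T)).tendsto_zero hx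
  · choose g hg hgx using fun j => exists_dual_vector'' ℝ (T (x j) (k j))
    set S := (ZeroAtInftyContinuousMap.diagonalCLM g hg hk).comp T
    have hnorming : Tendsto (fun j => g j (T (x j) (k j))) atTop (𝓝 0) :=
      squeeze_zero_norm (fun j => ZeroAtInftyContinuousMap.norm_apply_le (S (x j)) j)
        (tendsto_norm_zero.comp ((h2 S).tendsto_zero hx))
    rw [tendsto_zero_iff_norm_tendsto_zero]
    simpa only [hgx, RCLike.ofReal_real_eq_id, id] using hnorming

theorem uc_into_c0_of_F {E F : Type*} [NormedAddCommGroup E] [NormedSpace ℝ E] [CompleteSpace E] [NormedAddCommGroup F] [NormedSpace ℝ F] [CompleteSpace F]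
    (h1 : ∀ T : E →L[ℝ] F, UCop T)
    (h2 : ∀ T : E →L[ℝ] C₀(ℕ, ℝ), UCop T) :
    ∀ T : E →L[ℝ] C₀(ℕ, F), UCop T :=
  uc_into_c0_of_F_general h1 h2

end
end

section
/- Let A : E^k → F be continuous k-linear and suppose that whenever one of k weakly Cauchy sequences is replaced by the difference of two of its subsequences (hence weakly null), A applied to the resulting tuple tends to 0 in norm. Then for any weakly Cauchy sequences (x₁ⁿ), …, (x_kⁿ) in E, the sequence (A(x₁ⁿ, …, x_kⁿ))ₙ is norm Cauchy, hence norm convergent. -/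
open Filter Topology NormedSpace ContinuousLinearMap ZeroAtInfty

noncomputable section

/-! A sequence is Cauchy as soon as `u (r n) - u (s n) → 0` for all pairs of index sequences
`r, s → ∞`. For such a pair, the telescoping identity `MultilinearMap.map_sub_map_piecewise` writes
`A (x (r n)) - A (x (s n))` as a sum of `k` terms, the `i`-th of which has the weakly null
sequence `x i (r n) - x i (s n)` in slot `i` and weakly Cauchy sequences in the other slots;
each term tends to `0` by hypothesis. -/

theorem cauchySeq_of_tendsto_sub_comp {G : Type*} [SeminormedAddCommGroup G] {u : ℕ → G}
    (hu : ∀ r s : ℕ → ℕ, Tendsto r atTop atTop → Tendsto s atTop atTop →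
      Tendsto (fun n => u (r n) - u (s n)) atTop (𝓝 0)) :
    CauchySeq u := by
  rw [cauchySeq_iff_tendsto_dist_atTop_0, tendsto_iff_seq_tendsto]
  intro p hp
  rw [← prod_atTop_atTop_eq] at hp
  simpa [Function.comp_def, dist_eq_norm] using
    (hu _ _ (tendsto_fst.comp hp) (tendsto_snd.comp hp)).norm

section WeakSequences

variable {E : Type*} [NormedAddCommGroup E] [NormedSpace ℝ E] {x : ℕ → E}

theorem WeaklyConvTo.weaklyCauchy {x₀ : E} (hx : WeaklyConvTo x x₀) : WeaklyCauchy x :=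
  fun φ => ⟨φ x₀, hx φ⟩

theorem WeaklyCauchy.comp_tendsto (hx : WeaklyCauchy x) {r : ℕ → ℕ}
    (hr : Tendsto r atTop atTop) : WeaklyCauchy (x ∘ r) := fun φ =>
  let ⟨l, hl⟩ := hx φ
  ⟨l, hl.comp hr⟩

theorem WeaklyCauchy.weaklyConvTo_zero_sub_comp (hx : WeaklyCauchy x) {r s : ℕ → ℕ}
    (hr : Tendsto r atTop atTop) (hs : Tendsto s atTop atTop) :
    WeaklyConvTo (fun n => x (r n) - x (s n)) 0 := fun φ => by
  obtain ⟨l, hl⟩ := hx φ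
  simpa using (hl.comp hr).sub (hl.comp hs)

end WeakSequences

theorem norm_cauchy_of_weakly_null_case_general {E F : Type*} [NormedAddCommGroup E] [NormedSpace ℝ E] [NormedAddCommGroup F] [NormedSpace ℝ F] [CompleteSpace F]
    {k : ℕ} (A : ContinuousMultilinearMap ℝ (fun _ : Fin k => E) F)
    (h : ∀ (y : Fin k → ℕ → E), (∀ j, WeaklyCauchy (y j)) →
      ∀ j₀ : Fin k, WeaklyConvTo (y j₀) 0 →
        Tendsto (fun n => ‖A fun j => y j n‖) atTop (𝓝 0))
    (x : Fin k → ℕ → E) (hx : ∀ j, WeaklyCauchy (x j)) :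
    CauchySeq (fun n => A fun j => x j n) ∧
      ∃ y : F, Tendsto (fun n => A fun j => x j n) atTop (𝓝 y) := by
  have hcauchy : CauchySeq (fun n => A fun j => x j n) := by
    refine cauchySeq_of_tendsto_sub_comp fun r s hr hs => ?_
    let y : Fin k → Fin k → ℕ → E := fun i j =>
      if j < i then x j ∘ r else if i = j then fun n => x j (r n) - x j (s n) else x j ∘ s
    have htelescope : ∀ n, (A fun j => x j (r n)) - (A fun j => x j (s n)) =
        ∑ i, A fun j => y i j n := fun n => by
      simpa [y, apply_ite (fun f : ℕ → E => f n)] using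
        A.toMultilinearMap.map_sub_map_piecewise (fun j => x j (r n)) (fun j => x j (s n)) .univ
    simp_rw [htelescope]
    rw [← Finset.sum_const_zero (s := (Finset.univ : Finset (Fin k)))]
    refine tendsto_finsetSum _ fun i _ => tendsto_zero_iff_norm_tendsto_zero.2 (h (y i) ?_ i ?_)
    · intro j
      dsimp only [y]
      split_ifs
      · exact (hx j).comp_tendsto hr
      · exact ((hx j).weaklyConvTo_zero_sub_comp hr hs).weaklyCauchy
      · exact (hx j).comp_tendsto hs
    · simpa [y] using (hx i).weaklyConvTo_zero_sub_comp hr hs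
  exact ⟨hcauchy, cauchySeq_tendsto_of_complete hcauchy⟩

theorem norm_cauchy_of_weakly_null_case {E F : Type*} [NormedAddCommGroup E] [NormedSpace ℝ E] [CompleteSpace E] [NormedAddCommGroup F] [NormedSpace ℝ F] [CompleteSpace F]
    {k : ℕ} (A : ContinuousMultilinearMap ℝ (fun _ : Fin k => E) F)
    (h : ∀ (y : Fin k → ℕ → E), (∀ j, WeaklyCauchy (y j)) →
      ∀ j₀ : Fin k, WeaklyConvTo (y j₀) 0 →
        Tendsto (fun n => ‖A fun j => y j n‖) atTop (𝓝 0))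
    (x : Fin k → ℕ → E) (hx : ∀ j, WeaklyCauchy (x j)) :
    CauchySeq (fun n => A fun j => x j n) ∧
      ∃ y : F, Tendsto (fun n => A fun j => x j n) atTop (𝓝 y) :=
  norm_cauchy_of_weakly_null_case_general A h x hx

end
end
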